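/- arXiv:math/0310330 — 2 statements merged into one kernel-verified Lean document; each statement's English description precedes it below -/
import Mathlib

section
/- Let σ : 𝓗 → ℝ be a function on a class of Hamiltonians that is continuous along the path λ ↦ λH for λ ∈ (0,1], satisfies σ(λH) ∈ 𝒮(λH) where 𝒮(λH) = λ·𝒮 for a fixed compact nowhere dense set 𝒮 ⊆ ℝ, and satisfies σ(λH) = λ·max H for all sufficiently small λ > 0. Then σ(H) = max H. -/
open Set

/-- Abstract action-selector lemma: if `σ(λH) ∈ λ·𝒮` for a fixed compact nowhere dense
set `𝒮 ⊆ ℝ`, `λ ↦ σ(λH)` is continuous on `(0,1]`, and `σ(λH) = λ·max H` for all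
sufficiently small `λ > 0`, then `σ(H) = max H`. Here `σl : ℝ → ℝ` stands for
`λ ↦ σ(λH)` and `M = max H`. -/
theorem stmt_3 (S : Set ℝ) (hScpt : IsCompact S) (hSnwd : interior (closure S) = ∅)
    (σl : ℝ → ℝ) (M : ℝ)
    (hcont : ContinuousOn σl (Ioc 0 1))
    (hspec : ∀ l ∈ Ioc (0:ℝ) 1, ∃ s ∈ S, σl l = l * s)
    (hsmall : ∃ l₀ > 0, ∀ l : ℝ, 0 < l → l ≤ l₀ → l ≤ 1 → σl l = l * M) :
    σl 1 = M := by
  set f : ℝ → ℝ := fun l => σl l / l with hfdef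
  have hf : ContinuousOn f (Ioc 0 1) :=
    hcont.div continuousOn_id (fun l hl => ne_of_gt hl.1)
  have hfS : ∀ l ∈ Ioc (0:ℝ) 1, f l ∈ S := by
    intro l hl
    obtain ⟨s, hs, heq⟩ := hspec l hl
    have : f l = s := by
      show σl l / l = s
      rw [heq]
      exact mul_div_cancel_left₀ s (ne_of_gt hl.1)
    rwa [this]
  obtain ⟨l₀, hl₀, hsm⟩ := hsmall
  set a : ℝ := min l₀ 1 with ha
  have ha0 : 0 < a := lt_min hl₀ one_pos
  have ha1 : a ≤ 1 := min_le_right _ _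
  have haI : a ∈ Ioc (0:ℝ) 1 := ⟨ha0, ha1⟩
  have hfa : f a = M := by
    show σl a / a = M
    rw [hsm a ha0 (min_le_left _ _) ha1]
    exact mul_div_cancel_left₀ M (ne_of_gt ha0)
  have hsub : Icc a 1 ⊆ Ioc (0:ℝ) 1 := fun x hx => ⟨lt_of_lt_of_le ha0 hx.1, hx.2⟩
  have hfu : ContinuousOn f (uIcc a 1) := by
    rw [uIcc_of_le ha1]; exact hf.mono hsub
  have hiv : uIcc (f a) (f 1) ⊆ f '' uIcc a 1 := intermediate_value_uIcc hfu
  have himg : f '' uIcc a 1 ⊆ S := by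
    rintro _ ⟨x, hx, rfl⟩
    rw [uIcc_of_le ha1] at hx
    exact hfS x (hsub hx)
  have hkey : f 1 = f a := by
    by_contra hne
    have hioo : Ioo (min (f a) (f 1)) (max (f a) (f 1)) ⊆ interior (closure S) := by
      apply interior_maximal
      · exact Ioo_subset_Icc_self.trans ((hiv.trans himg).trans subset_closure)
      · exact isOpen_Ioo
    have hne' : min (f a) (f 1) < max (f a) (f 1) :=
      min_lt_max.mpr (Ne.symm hne)
    obtain ⟨x, hx⟩ := nonempty_Ioo.mpr hne'
    rw [hSnwd] at hioo
    exact hioo hx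
  have h1 : σl 1 / 1 = M := hkey.trans hfa
  rwa [div_one] at h1
end

section
/- Let c : I → ℝ be monotone increasing on an interval I, differentiable at h ∈ I. Suppose for every A > c'(h) and every ε > 0 there is a periodic orbit of period ≤ A in the shell {h < H < h + ε}. Then, assuming the shells are contained in a fixed compact set and the Hamiltonian vector field is continuous, the level {H = h} carries a periodic orbit of period ≤ c'(h). (Compactness limit statement: a sequence of T_i-periodic orbits with T_i → T ≤ c'(h), contained in a compact set, contained in shells shrinking to the level {H = h}, has a subsequence converging uniformly to a T-periodic orbit on {H = h}.) -/
/-!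
Pick orbits `xₙ` of period `Tₙ ≤ c' + 1/(n+1)` in the shells of width `1/(n+1)`. Being solutions
of `x' = X x` inside the compact set `Kc`, they are equi-Lipschitz and satisfy a first-order Taylor
estimate that is uniform in `n`. Instead of extracting an Arzelà–Ascoli subsequence, take limits
pointwise along an ultrafilter finer than `atTop`: compactness provides the limits, the
equi-Lipschitz bound carries periodicity over to the limit curve, the uniform Taylor estimate
carries the differential equation, and the shrinking shells put the limit on `{H = h}`.
-/

open Set Filter Topology NNReal

theorem IsCompact.exists_tendsto_ultrafilter {ι X : Type*} [TopologicalSpace X] {K : Set X}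
    (hK : IsCompact K) (U : Ultrafilter ι) {f : ι → X} (hf : ∀ i, f i ∈ K) :
    ∃ p ∈ K, Tendsto f U (𝓝 p) :=
  hK.ultrafilter_le_nhds' (U.map f) (Eventually.of_forall (f := (U : Filter ι)) hf)

theorem le_of_tendsto_of_le_add_one_div {F : Filter ℕ} [F.NeBot] (hF : F ≤ atTop) {a : ℕ → ℝ}
    {p b : ℝ} (ha : Tendsto a F (𝓝 p)) (hab : ∀ n : ℕ, a n ≤ b + 1 / (n + 1)) : p ≤ b := by
  have hb : Tendsto (fun n : ℕ => b + 1 / ((n : ℝ) + 1)) F (𝓝 b) := by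
    simpa using (tendsto_one_div_add_atTop_nhds_zero_nat.const_add b).mono_left hF
  exact le_of_tendsto_of_tendsto' ha hb hab

theorem Function.Periodic.of_tendsto {ι M : Type*} [MetricSpace M] {F : Filter ι} [F.NeBot]
    {x : ι → ℝ → M} {y : ℝ → M} {T : ι → ℝ} {T₀ : ℝ} {L : ℝ≥0}
    (hper : ∀ i, Function.Periodic (x i) (T i)) (hL : ∀ i, LipschitzWith L (x i))
    (hT : Tendsto T F (𝓝 T₀)) (hy : ∀ t, Tendsto (fun i => x i t) F (𝓝 (y t))) :
    Function.Periodic y T₀ := by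
  intro t
  have hdist : Tendsto (fun i => dist (x i t) (x i (t + T₀))) F (𝓝 0) := by
    have hTdist : Tendsto (fun i => L * dist (T i) T₀) F (𝓝 0) := by
      simpa using (tendsto_iff_dist_tendsto_zero.mp hT).const_mul (L : ℝ)
    refine squeeze_zero (fun _ => dist_nonneg) (fun i => ?_) hTdist
    calc dist (x i t) (x i (t + T₀)) = dist (x i (t + T i)) (x i (t + T₀)) := by rw [hper i]
      _ ≤ L * dist (t + T i) (t + T₀) := (hL i).dist_le_mul _ _
      _ = L * dist (T i) T₀ := by rw [dist_add_left]
  exact tendsto_nhds_unique (hy (t + T₀)) ((hy t).congr_dist hdist)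

section OrbitLimits

variable {E : Type*} [NormedAddCommGroup E] [NormedSpace ℝ E] {X : E → E} {K : Set E}

theorem exists_lipschitzWith_of_hasDerivAt (hK : IsCompact K) (hX : ContinuousOn X K) :
    ∃ L : ℝ≥0, ∀ x : ℝ → E, (∀ t, HasDerivAt x (X (x t)) t) → (∀ t, x t ∈ K) →
      LipschitzWith L x := by
  obtain ⟨M, hM⟩ := hK.exists_bound_of_continuousOn hX
  refine ⟨M.toNNReal, fun x hx hxK => ?_⟩
  refine lipschitzWith_of_nnnorm_deriv_le (fun t => (hx t).differentiableAt) fun t => ?_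
  rw [(hx t).deriv, ← NNReal.coe_le_coe, coe_nnnorm, Real.coe_toNNReal']
  exact (hM _ (hxK t)).trans (le_max_left _ _)

theorem norm_sub_sub_smul_le_of_hasDerivAt {x : ℝ → E} (hx : ∀ s, HasDerivAt x (X (x s)) s)
    {t u ε : ℝ} (hε : ∀ s ∈ uIcc t u, ‖X (x s) - X (x t)‖ ≤ ε) :
    ‖x u - x t - (u - t) • X (x t)‖ ≤ ε * ‖u - t‖ := by
  have hderiv : ∀ s ∈ uIcc t u, HasDerivWithinAt (fun s => x s - (s - t) • X (x t))
      (X (x s) - X (x t)) (uIcc t u) s := fun s _ =>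
    ((hx s).sub (((hasDerivAt_id s).sub_const t).smul_const (X (x t)) |>.congr_deriv
      (one_smul ℝ _))).hasDerivWithinAt
  simpa [sub_right_comm] using (convex_uIcc t u).norm_image_sub_le_of_norm_hasDerivWithin_le
    hderiv hε left_mem_uIcc right_mem_uIcc

theorem eventually_norm_sub_sub_smul_le (hK : IsCompact K) (hX : ContinuousOn X K) {ε : ℝ}
    (hε : 0 < ε) (t : ℝ) :
    ∀ᶠ u in 𝓝 t, ∀ x : ℝ → E, (∀ s, HasDerivAt x (X (x s)) s) → (∀ s, x s ∈ K) →
      ‖x u - x t - (u - t) • X (x t)‖ ≤ ε * ‖u - t‖ := by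
  obtain ⟨L, hL⟩ := exists_lipschitzWith_of_hasDerivAt hK hX
  obtain ⟨η, hη, hXη⟩ :=
    Metric.uniformContinuousOn_iff.mp (hK.uniformContinuousOn_of_continuous hX) ε hε
  have hδ : 0 < η / (L + 1) := by positivity
  filter_upwards [Metric.ball_mem_nhds t hδ] with u hu x hx hxK
  rw [Metric.mem_ball, Real.dist_eq, lt_div_iff₀ (by positivity)] at hu
  refine norm_sub_sub_smul_le_of_hasDerivAt hx fun s hs => ?_
  rw [← dist_eq_norm]
  refine (hXη _ (hxK s) _ (hxK t) ?_).le
  calc dist (x s) (x t) ≤ L * dist s t := (hL x hx hxK).dist_le_mul s t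
    _ ≤ (L + 1) * |u - t| := by
        rw [Real.dist_eq]
        exact mul_le_mul (by linarith) (abs_sub_left_of_mem_uIcc hs) (abs_nonneg _)
          (by positivity)
    _ < η := by linarith

theorem hasDerivAt_of_tendsto {ι : Type*} {F : Filter ι} [F.NeBot] {x : ι → ℝ → E} {y : ℝ → E}
    {t : ℝ} (hX : ContinuousAt X (y t)) (hy : ∀ u, Tendsto (fun i => x i u) F (𝓝 (y u)))
    (hest : ∀ ε > 0, ∀ᶠ u in 𝓝 t, ∀ᶠ i in F,
      ‖x i u - x i t - (u - t) • X (x i t)‖ ≤ ε * ‖u - t‖) :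
    HasDerivAt y (X (y t)) t := by
  rw [hasDerivAt_iff_isLittleO, Asymptotics.isLittleO_iff]
  intro ε hε
  filter_upwards [hest ε hε] with u hu
  have hlim := ((hy u).sub (hy t)).sub ((hX.tendsto.comp (hy t)).const_smul (u - t))
  exact le_of_tendsto hlim.norm hu

theorem exists_periodic_limit_of_hasDerivAt {ι : Type*} (hK : IsCompact K) (hX : Continuous X)
    {x : ι → ℝ → E} {T : ι → ℝ} {S : Set ℝ} (hS : IsCompact S)
    (hx : ∀ i t, HasDerivAt (x i) (X (x i t)) t) (hxK : ∀ i t, x i t ∈ K)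
    (hper : ∀ i, Function.Periodic (x i) (T i)) (hT : ∀ i, T i ∈ S) (U : Ultrafilter ι) :
    ∃ T₀ ∈ S, ∃ y : ℝ → E, Tendsto T U (𝓝 T₀) ∧ (∀ t, Tendsto (fun i => x i t) U (𝓝 (y t))) ∧
      Function.Periodic y T₀ ∧ ∀ t, HasDerivAt y (X (y t)) t := by
  obtain ⟨T₀, hT₀S, hT₀⟩ := hS.exists_tendsto_ultrafilter U hT
  choose y _ hy using fun t => hK.exists_tendsto_ultrafilter U (hxK · t)
  obtain ⟨L, hL⟩ := exists_lipschitzWith_of_hasDerivAt hK hX.continuousOn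
  refine ⟨T₀, hT₀S, y, hT₀, hy, .of_tendsto hper (fun i => hL _ (hx i) (hxK i)) hT₀ hy,
    fun t => hasDerivAt_of_tendsto hX.continuousAt hy fun ε hε => ?_⟩
  filter_upwards [eventually_norm_sub_sub_smul_le hK hX.continuousOn hε t] with u hu
  exact Eventually.of_forall fun i => hu (x i) (hx i) (hxK i)

end OrbitLimits

theorem stmt_8_general {E : Type*} [NormedAddCommGroup E] [NormedSpace ℝ E]
    (X : E → E) (hX : Continuous X) (H : E → ℝ) (hH : Continuous H)
    (Kc : Set E) (hKc : IsCompact Kc)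
    (h c' : ℝ)
    (horb : ∀ A > c', ∀ ε > 0, ∃ (T : ℝ) (x : ℝ → E),
      0 < T ∧ T ≤ A ∧ Function.Periodic x T ∧
      (∀ t, HasDerivAt x (X (x t)) t) ∧ (∀ t, x t ∈ Kc) ∧
      ∀ t, h < H (x t) ∧ H (x t) < h + ε) :
    ∃ (T : ℝ) (y : ℝ → E), 0 ≤ T ∧ T ≤ c' ∧ Function.Periodic y T ∧
      (∀ t, HasDerivAt y (X (y t)) t) ∧ ∀ t, H (y t) = h := by
  choose T x hT0 hTle hper hx hxK hshell using fun n : ℕ =>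
    horb (c' + 1 / (n + 1)) (lt_add_of_pos_right _ Nat.one_div_pos_of_nat) (1 / (n + 1))
      Nat.one_div_pos_of_nat
  have hTS : ∀ n, T n ∈ Icc 0 (c' + 1) := fun n =>
    ⟨(hT0 n).le, (hTle n).trans (by gcongr; exact (div_le_one (by positivity)).2 (by simp))⟩
  set U : Ultrafilter ℕ := .of atTop
  obtain ⟨T₀, hT₀S, y, hT₀, hy, hyper, hyX⟩ :=
    exists_periodic_limit_of_hasDerivAt hKc hX isCompact_Icc hx hxK hper hTS U
  have hU : (U : Filter ℕ) ≤ atTop := Ultrafilter.of_le _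
  have hHy : ∀ t, Tendsto (fun n => H (x n t)) U (𝓝 (H (y t))) :=
    fun t => (hH.tendsto _).comp (hy t)
  refine ⟨T₀, y, hT₀S.1, le_of_tendsto_of_le_add_one_div hU hT₀ hTle, hyper, hyX,
    fun t => le_antisymm ?_ ?_⟩
  · exact le_of_tendsto_of_le_add_one_div hU (hHy t) fun n => (hshell n t).2.le
  · exact ge_of_tendsto' (hHy t) fun n => (hshell n t).1.le

/-- If `c` is monotone increasing, differentiable at `h` with derivative `c'`, and for
every `A > c'` and every `ε > 0` there is a periodic orbit of the (continuous) vector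
field `X` of period `≤ A`, contained in a fixed compact set, lying in the shell
`{h < H < h + ε}`, then the level `{H = h}` carries a periodic orbit of period `≤ c'`. -/
theorem stmt_8 {E : Type*} [NormedAddCommGroup E] [NormedSpace ℝ E]
    (X : E → E) (hX : Continuous X) (H : E → ℝ) (hH : Continuous H)
    (Kc : Set E) (hKc : IsCompact Kc)
    (I : Set ℝ) (c : ℝ → ℝ) (hmono : MonotoneOn c I)
    (h c' : ℝ) (hhI : h ∈ I) (hderiv : HasDerivWithinAt c c' I h)
    (horb : ∀ A > c', ∀ ε > 0, ∃ (T : ℝ) (x : ℝ → E),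
      0 < T ∧ T ≤ A ∧ Function.Periodic x T ∧
      (∀ t, HasDerivAt x (X (x t)) t) ∧ (∀ t, x t ∈ Kc) ∧
      ∀ t, h < H (x t) ∧ H (x t) < h + ε) :
    ∃ (T : ℝ) (y : ℝ → E), 0 ≤ T ∧ T ≤ c' ∧ Function.Periodic y T ∧
      (∀ t, HasDerivAt y (X (y t)) t) ∧ ∀ t, H (y t) = h :=
  stmt_8_general X hX H hH Kc hKc h c' horb
end
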